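/- Let N be the abelian group generated by elements Π_{i,j} for i, j ∈ {0,1,2} and an element F, subject to the relations Σᵢ Π_{i,j} = F for each j and Σⱼ Π_{i,j} = F for each i. Let the cyclic group C₃ = ⟨σ⟩ act on N by σ(Π_{i,j}) = Π_{i+1 mod 3, j} and σ(F) = F. Then N is a free abelian group of rank 5 and H¹(C₃, N) ≅ ℤ/3ℤ. -/

import Mathlib

open Finsupp

/-- The free abelian group on symbols `Π_{i,j}` (`i, j ∈ ℤ/3`) and `F`. -/
abbrev FreeN : Type := ((ZMod 3 × ZMod 3) ⊕ Unit) →₀ ℤ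

/-- The generator `Π_{i,j}`. -/
noncomputable def pij (i j : ZMod 3) : FreeN := Finsupp.single (Sum.inl (i, j)) 1

/-- The generator `F` (hyperplane class). -/
noncomputable def Fcl : FreeN := Finsupp.single (Sum.inr ()) 1

/-- The subgroup of relations `Σᵢ Π_{i,j} = F` and `Σⱼ Π_{i,j} = F`. -/
noncomputable def rels : AddSubgroup FreeN :=
  AddSubgroup.closure
    ({r | ∃ j : ZMod 3, r = (∑ i : ZMod 3, pij i j) - Fcl} ∪
     {r | ∃ i : ZMod 3, r = (∑ j : ZMod 3, pij i j) - Fcl})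

/-- The class group `N`: quotient of the free group by the relations. -/
abbrev Ncl : Type := FreeN ⧸ rels

/-!
The relations let one eliminate the last row and the last column of `Π`, so `N` is free on
`Π₀₀, Π₀₁, Π₁₀, Π₁₁, F`. Since `C₃` is cyclic, `H¹(C₃, N) = ker Nm / im (σ - 1)`. The norm of
`Π_{i,j}` is the sum of column `j`, that is `F`, so `Nm = deg · F` with `deg Π_{i,j} = 1`,
`deg F = 3`, and `ker Nm = ker deg`. The column index `Π_{i,j} ↦ j` is a `σ`-invariant functional
`N → ℤ/3`; it vanishes on `im (σ - 1)`, maps `Π₀₁ - Π₀₀ ∈ ker Nm` to `1`, and solving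
`(σ - 1) y = x` in coordinates shows that its kernel on `ker Nm` is exactly `im (σ - 1)`.
-/

theorem LinearMap.nonempty_equiv_of_ker_eq {R M P Q : Type*} [Ring R] [AddCommGroup M]
    [AddCommGroup P] [AddCommGroup Q] [Module R M] [Module R P] [Module R Q]
    {f : M →ₗ[R] P} {g : M →ₗ[R] Q} (hf : Function.Surjective f) (hg : Function.Surjective g)
    (h : LinearMap.ker f = LinearMap.ker g) : Nonempty (P ≃ₗ[R] Q) :=
  ⟨(f.quotKerEquivOfSurjective hf).symm ≪≫ₗ Submodule.quotEquivOfEq _ _ h ≪≫ₗ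
    g.quotKerEquivOfSurjective hg⟩

universe u

open CategoryTheory in
theorem Rep.FiniteCyclicGroup.nonempty_H1_equiv {k G : Type u} [CommRing k] [CommGroup G]
    [Fintype G] (A : Rep k G) (g : G) (hg : ∀ x, x ∈ Subgroup.zpowers g) {Q : Type*}
    [AddCommGroup Q] [Module k Q] (f : LinearMap.ker A.ρ.norm →ₗ[k] Q)
    (hf : Function.Surjective f)
    (hker : ∀ x, f x = 0 ↔ x.1 ∈ LinearMap.range (A.ρ g - 1)) :
    Nonempty (groupCohomology.H1 A ≃ₗ[k] Q) := by
  have hπ : Function.Surjective (groupCohomologyπOdd A g hg 1 odd_one) := by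
    rw [← ModuleCat.epi_iff_surjective]
    -- instance search does not see this factor through the `ModuleCat.of` in its source
    have : Epi (ShortComplex.moduleCatCyclesIso (subCompNormHom A g)).inv := inferInstance
    exact @epi_comp _ _ _ _ _ _ this _ (epi_comp _ _)
  refine LinearMap.nonempty_equiv_of_ker_eq hπ hf (Submodule.ext fun x => ?_)
  exact (groupCohomologyπOdd_eq_zero_iff A g hg 1 odd_one x).trans (hker x).symm

theorem ZMod.three_cases (i : ZMod 3) : i = 0 ∨ i = 1 ∨ i = 2 := by
  revert i; decide

theorem ZMod.sum_univ_three {M : Type*} [AddCommMonoid M] (f : ZMod 3 → M) :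
    ∑ i, f i = f 0 + f 1 + f 2 :=
  Fin.sum_univ_three f

theorem ZMod.mem_zpowers_ofAdd_one {n : ℕ} (x : Multiplicative (ZMod n)) :
    x ∈ Subgroup.zpowers (Multiplicative.ofAdd 1) := by
  obtain ⟨k, hk⟩ := ZMod.intCast_surjective x.toAdd
  exact ⟨k, show Multiplicative.ofAdd 1 ^ k = x by rw [← ofAdd_zsmul, zsmul_one, hk, ofAdd_toAdd]⟩

namespace Ncl

noncomputable abbrev P (i j : ZMod 3) : Ncl := QuotientAddGroup.mk (pij i j)

noncomputable abbrev F : Ncl := QuotientAddGroup.mk Fcl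

theorem sum_P_left (j : ZMod 3) : ∑ i, P i j = F := by
  have h : (∑ i, pij i j) - Fcl ∈ rels := AddSubgroup.subset_closure (Or.inl ⟨j, rfl⟩)
  rw [← sub_eq_zero, ← QuotientAddGroup.mk_sum, ← QuotientAddGroup.mk_sub]
  exact (QuotientAddGroup.eq_zero_iff _).2 h

theorem sum_P_right (i : ZMod 3) : ∑ j, P i j = F := by
  have h : (∑ j, pij i j) - Fcl ∈ rels := AddSubgroup.subset_closure (Or.inr ⟨i, rfl⟩)
  rw [← sub_eq_zero, ← QuotientAddGroup.mk_sum, ← QuotientAddGroup.mk_sub]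
  exact (QuotientAddGroup.eq_zero_iff _).2 h

theorem P_two_left (j : ZMod 3) : P 2 j = F - P 0 j - P 1 j := by
  rw [← sum_P_left j, ZMod.sum_univ_three]
  abel

theorem P_two_right (i : ZMod 3) : P i 2 = F - P i 0 - P i 1 := by
  rw [← sum_P_right i, ZMod.sum_univ_three]
  abel

theorem addMonoidHom_ext {M : Type*} [AddMonoid M] {f g : Ncl →+ M}
    (hP : ∀ i j, f (P i j) = g (P i j)) (hF : f F = g F) : f = g := by
  refine QuotientAddGroup.addMonoidHom_ext _ (Finsupp.addHom_ext' fun s => ?_)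
  refine AddMonoidHom.ext_int ?_
  rcases s with ⟨i, j⟩ | ⟨⟩
  exacts [hP i j, hF]

section Lift

variable {M : Type*} [AddCommGroup M]

noncomputable def lift (v : ZMod 3 → ZMod 3 → M) (w : M) (hcol : ∀ j, ∑ i, v i j = w)
    (hrow : ∀ i, ∑ j, v i j = w) : Ncl →+ M :=
  QuotientAddGroup.lift rels
    (Finsupp.liftAddHom fun s => zmultiplesHom M (Sum.elim (fun p => v p.1 p.2) (fun _ => w) s))
    (by
      rw [rels, AddSubgroup.closure_le]
      rintro r (⟨j, rfl⟩ | ⟨i, rfl⟩) <;>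
        simp only [SetLike.mem_coe, AddMonoidHom.mem_ker, map_sub, map_sum] <;>
        simp [pij, Fcl, hcol, hrow])

variable (v : ZMod 3 → ZMod 3 → M) (w : M) (hcol : ∀ j, ∑ i, v i j = w)
  (hrow : ∀ i, ∑ j, v i j = w)

@[simp]
theorem lift_P (i j : ZMod 3) : lift v w hcol hrow (P i j) = v i j := by
  simp [lift, pij]

@[simp]
theorem lift_F : lift v w hcol hrow F = w := by
  simp [lift, Fcl]

end Lift

noncomputable def basis : Fin 5 → Ncl := ![P 0 0, P 0 1, P 1 0, P 1 1, F]

theorem addMonoidHom_ext_basis {M : Type*} [AddCommGroup M] {f g : Ncl →+ M}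
    (h : ∀ k, f (basis k) = g (basis k)) : f = g := by
  have hF : f F = g F := h 4
  have hP01 : ∀ i j, i ≠ 2 → j ≠ 2 → f (P i j) = g (P i j) := by
    intro i j hi hj
    obtain rfl | rfl | rfl := ZMod.three_cases i <;> obtain rfl | rfl | rfl := ZMod.three_cases j
    all_goals first | exact absurd rfl ‹_› | exact h 0 | exact h 1 | exact h 2 | exact h 3
  have hP0 : ∀ i j, i ≠ 2 → f (P i j) = g (P i j) := by
    intro i j hi
    by_cases hj : j = 2
    · simp only [hj, P_two_right, map_sub, hF, hP01 i 0 hi (by decide), hP01 i 1 hi (by decide)]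
    · exact hP01 i j hi hj
  refine addMonoidHom_ext (fun i j => ?_) hF
  by_cases hi : i = 2
  · simp only [hi, P_two_left, map_sub, hF, hP0 0 j (by decide), hP0 1 j (by decide)]
  · exact hP0 i j hi

noncomputable def ofCoords : (Fin 5 → ℤ) →+ Ncl :=
  (Fintype.linearCombination ℤ basis).toAddMonoidHom

theorem ofCoords_apply (x : Fin 5 → ℤ) :
    ofCoords x = x 0 • P 0 0 + x 1 • P 0 1 + x 2 • P 1 0 + x 3 • P 1 1 + x 4 • F := by
  simp [ofCoords, Fintype.linearCombination_apply, Fin.sum_univ_five, basis]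

/-- The coordinates of `Π_{i,j}` in the basis `Π₀₀, Π₀₁, Π₁₀, Π₁₁, F`, read off from the
relations. -/
def coordsP : ZMod 3 → ZMod 3 → Fin 5 → ℤ :=
  ![![![1, 0, 0, 0, 0], ![0, 1, 0, 0, 0], ![-1, -1, 0, 0, 1]],
    ![![0, 0, 1, 0, 0], ![0, 0, 0, 1, 0], ![0, 0, -1, -1, 1]],
    ![![-1, 0, -1, 0, 1], ![0, -1, 0, -1, 1], ![1, 1, 1, 1, -1]]]

noncomputable def coords : Ncl →+ (Fin 5 → ℤ) :=
  lift coordsP (Pi.single 4 1) (by decide) (by decide)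

theorem coords_basis (k : Fin 5) : coords (basis k) = Pi.single k 1 := by
  fin_cases k <;>
    simp only [basis, coords, Fin.zero_eta, Fin.mk_one, Fin.reduceFinMk, Matrix.cons_val,
      Matrix.cons_val_zero, Matrix.cons_val_one, lift_P, lift_F] <;>
    decide

theorem coords_ofCoords (x : Fin 5 → ℤ) : coords (ofCoords x) = x := by
  ext k
  simp [ofCoords, Fintype.linearCombination_apply, coords_basis, Pi.single_apply]

theorem ofCoords_coords (a : Ncl) : ofCoords (coords a) = a := by
  refine DFunLike.congr_fun (addMonoidHom_ext_basis (f := ofCoords.comp coords) (g := .id _)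
    fun k => ?_) a
  simp [coords_basis, ofCoords, Fintype.linearCombination_apply_single]

noncomputable def coordsEquiv : Ncl ≃+ (Fin 5 → ℤ) :=
  { coords with
    invFun := ofCoords
    left_inv := ofCoords_coords
    right_inv := coords_ofCoords }

section Action

open Multiplicative

variable (ρ : Representation ℤ (Multiplicative (ZMod 3)) Ncl)
  (hp : ∀ i j, ρ (ofAdd 1) (P i j) = P (i + 1) j) (hF : ρ (ofAdd 1) F = F)

include hp in
theorem rho_P (k i j : ZMod 3) : ρ (ofAdd k) (P i j) = P (i + k) j := by
  obtain rfl | rfl | rfl := ZMod.three_cases k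
  · simp
  · exact hp i j
  · rw [show ofAdd (2 : ZMod 3) = ofAdd 1 * ofAdd 1 from rfl, map_mul, Module.End.mul_apply, hp,
      hp, add_assoc]
    rfl

include hF in
theorem rho_F (g : Multiplicative (ZMod 3)) : ρ g F = F :=
  (ρ.mem_invariants_iff_of_forall_mem_zpowers _ ZMod.mem_zpowers_ofAdd_one F).2 hF g

noncomputable def deg : Ncl →+ ℤ :=
  lift (fun _ _ => 1) 3 (fun _ => by simp) (fun _ => by simp)

@[simp]
theorem deg_P (i j : ZMod 3) : deg (P i j) = 1 :=
  lift_P ..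

@[simp]
theorem deg_F : deg F = 3 :=
  lift_F ..

include hp hF in
theorem norm_eq_deg_smul (a : Ncl) : ρ.norm a = deg a • F := by
  refine DFunLike.congr_fun (addMonoidHom_ext (f := ρ.norm.toAddMonoidHom)
    (g := (zmultiplesHom Ncl F).comp deg) (fun i j => ?_) ?_) a
  · simp only [LinearMap.toAddMonoidHom_coe, Representation.norm, LinearMap.sum_apply,
      AddMonoidHom.comp_apply, deg_P, zmultiplesHom_apply, one_zsmul]
    rw [← Equiv.sum_comp ofAdd, ← sum_P_left j]
    simp only [rho_P ρ hp]
    exact Equiv.sum_comp (Equiv.addLeft i) (P · j)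
  · simp only [Representation.norm, LinearMap.toAddMonoidHom_coe, LinearMap.sum_apply, rho_F ρ hF,
      Finset.sum_const, Finset.card_univ, Fintype.card_multiplicative, ZMod.card,
      AddMonoidHom.comp_apply, deg_F, zmultiplesHom_apply]
    norm_cast

include hp hF in
theorem norm_eq_zero_iff (a : Ncl) : ρ.norm a = 0 ↔ deg a = 0 := by
  rw [norm_eq_deg_smul ρ hp hF]
  refine ⟨fun h => ?_, fun h => by rw [h, zero_zsmul]⟩
  have h3 := congrArg deg h
  simp only [map_zsmul, deg_F, map_zero, smul_eq_mul] at h3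
  omega

noncomputable def colIndex : Ncl →+ ZMod 3 :=
  lift (fun _ j => j) 0 (by decide) (by decide)

@[simp]
theorem colIndex_P (i j : ZMod 3) : colIndex (P i j) = j :=
  lift_P ..

@[simp]
theorem colIndex_F : colIndex F = 0 :=
  lift_F ..

include hp hF in
theorem colIndex_rho (a : Ncl) : colIndex (ρ (ofAdd 1) a) = colIndex a := by
  refine DFunLike.congr_fun (addMonoidHom_ext (f := colIndex.comp (ρ (ofAdd 1)).toAddMonoidHom)
    (g := colIndex) (fun i j => ?_) ?_) a <;>
    simp [hp, hF]

theorem deg_ofCoords (x : Fin 5 → ℤ) : deg (ofCoords x) = x 0 + x 1 + x 2 + x 3 + 3 * x 4 := by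
  simp only [ofCoords_apply, map_add, map_zsmul, deg_P, deg_F, smul_eq_mul]
  ring

theorem colIndex_ofCoords (x : Fin 5 → ℤ) : colIndex (ofCoords x) = ((x 1 + x 3 : ℤ) : ZMod 3) := by
  simp [ofCoords_apply]

include hp hF in
theorem rho_ofCoords (x : Fin 5 → ℤ) :
    ρ (ofAdd 1) (ofCoords x) = ofCoords ![-x 2, -x 3, x 0 - x 2, x 1 - x 3, x 2 + x 3 + x 4] := by
  simp only [ofCoords_apply, map_add, map_zsmul, hp, hF, zero_add, one_add_one_eq_two, P_two_left,
    Matrix.cons_val, Matrix.cons_val_zero, Matrix.cons_val_one]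
  module

include hp hF in
theorem ofCoords_mem_range (x : Fin 5 → ℤ) (hdeg : x 0 + x 1 + x 2 + x 3 + 3 * x 4 = 0)
    (hcol : ((x 1 + x 3 : ℤ) : ZMod 3) = 0) :
    ofCoords x ∈ LinearMap.range (ρ (ofAdd 1) - 1) := by
  obtain ⟨c, hc⟩ := (ZMod.intCast_zmod_eq_zero_iff_dvd _ 3).1 hcol
  -- `σ - 1` acts as `y ↦ (-y₀-y₂, -y₁-y₃, y₀-2y₂, y₁-2y₃, y₂+y₃)`, and this solves for `y`
  refine ⟨ofCoords ![-x 0 - x 4 - c, c - x 1, x 4 + c, -c, 0], ?_⟩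
  rw [LinearMap.sub_apply, Module.End.one_apply, rho_ofCoords ρ hp hF, ← map_sub]
  congr 1
  ext k
  fin_cases k <;>
    simp only [Pi.sub_apply, Matrix.cons_val, Matrix.cons_val_zero, Matrix.cons_val_one,
      Fin.zero_eta, Fin.mk_one, Fin.reduceFinMk] <;>
    omega

include hp hF in
theorem nonempty_H1_equiv_zmod : Nonempty (groupCohomology.H1 (Rep.of ρ) ≃ₗ[ℤ] ZMod 3) := by
  let K := LinearMap.ker ρ.norm
  have hmem : P 0 1 - P 0 0 ∈ K := by
    rw [LinearMap.mem_ker, norm_eq_zero_iff ρ hp hF]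
    simp
  refine Rep.FiniteCyclicGroup.nonempty_H1_equiv (Rep.of ρ) (ofAdd 1) ZMod.mem_zpowers_ofAdd_one
    (colIndex.toIntLinearMap.comp K.subtype) (fun z => ⟨(z.val : ℤ) • ⟨_, hmem⟩, ?_⟩) fun a => ?_
  · simp
  · obtain ⟨a, ha⟩ := a
    rw [LinearMap.mem_ker, norm_eq_zero_iff ρ hp hF] at ha
    simp only [LinearMap.comp_apply, Submodule.coe_subtype, AddMonoidHom.coe_toIntLinearMap]
    constructor
    · intro h
      rw [← ofCoords_coords a] at h ha ⊢
      rw [deg_ofCoords] at ha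
      rw [colIndex_ofCoords] at h
      exact ofCoords_mem_range ρ hp hF _ ha h
    · rintro ⟨y, rfl⟩
      simp [colIndex_rho ρ hp hF]

end Action

end Ncl

/-- `N` is free abelian of rank `5`, and for the `C₃`-action cyclically permuting the
first index of `Π_{i,j}` and fixing `F`, one has `H¹(C₃, N) ≅ ℤ/3ℤ`. -/
theorem stmt5 (ρ : Representation ℤ (Multiplicative (ZMod 3)) Ncl)
    (hp : ∀ i j : ZMod 3,
      ρ (Multiplicative.ofAdd (1 : ZMod 3)) (QuotientAddGroup.mk (pij i j)) =
        QuotientAddGroup.mk (pij (i + 1) j))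
    (hF : ρ (Multiplicative.ofAdd (1 : ZMod 3)) (QuotientAddGroup.mk Fcl) =
        QuotientAddGroup.mk Fcl) :
    Nonempty (Ncl ≃+ (Fin 5 → ℤ)) ∧
    Nonempty (groupCohomology.H1 (Rep.of ρ) ≃+ ZMod 3) :=
  ⟨⟨Ncl.coordsEquiv⟩, (Ncl.nonempty_H1_equiv_zmod ρ hp hF).map LinearEquiv.toAddEquiv⟩
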